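/- For all n, k ≥ 0, the q-poly-Bernoulli number B_{n,q}^{(k)} := ∑_{m=0}^{min(n,k)} [m]!_q · {n+1 brace m+1}_q · [m]!_q · {k+1 brace m+1}_q equals ∑_{(σ,τ)} q^{Inv*(σ) + Inv*(τ)}, where the sum runs over all pairs (σ, τ) such that for some m with 0 ≤ m ≤ min(n,k), σ is an ordered set partition of {0, 1, …, n} into m+1 blocks whose first block contains the element 0, and τ is an ordered set partition of {1, …, k+1} into m+1 blocks whose last block contains the element k+1. -/

import Mathlib

open Finset Polynomial

/-- The q-integer `[n]_q = 1 + q + ⋯ + q^(n-1)`. -/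
def qInt {R : Type*} [CommSemiring R] (q : R) (n : ℕ) : R :=
  ∑ i ∈ Finset.range n, q ^ i

/-- The q-factorial `[n]!_q = [1]_q [2]_q ⋯ [n]_q`. -/
def qFact {R : Type*} [CommSemiring R] (q : R) (n : ℕ) : R :=
  ∏ i ∈ Finset.range n, qInt q (i + 1)

/-- The Carlitz q-Stirling numbers of the second kind. -/
def qStirling {R : Type*} [CommSemiring R] (q : R) : ℕ → ℕ → R
  | 0, 0 => 1
  | 0, _ + 1 => 0
  | _ + 1, 0 => 0
  | n + 1, m + 1 => qStirling q n m + qInt q (m + 1) * qStirling q n (m + 1)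

/-- `ω` is an ordered set partition of the finite set `S`. -/
def IsOrderedPartitionOf (S : Finset ℕ) (ω : List (Finset ℕ)) : Prop :=
  (∀ B ∈ ω, B.Nonempty) ∧ List.Pairwise (fun B C => Disjoint B C) ω ∧
    (∀ x, x ∈ S ↔ ∃ B ∈ ω, x ∈ B)

/-- The inversion number `Inv*(ω)` of an ordered set partition. -/
def invStar (ω : List (Finset ℕ)) : ℕ :=
  ∑ p ∈ (Finset.range ω.length ×ˢ Finset.range ω.length).filter (fun p => p.1 < p.2),
    ((ω.getD p.1 ∅).filter (fun b => ∃ c ∈ ω.getD p.2 ∅, c < b)).card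

/-!
Both factors of a summand are generating functions of ordered set partitions. Removing the
largest element `x` of `S` from a partition into `M + 1` blocks either deletes a singleton block
`{x}` or shrinks a block; if `x` sat in block `i` it accounted for exactly `M - i` inversions, one
against the minimum of each later block. Summing over `i` gives the factor `[M + 1]_q` and hence
the recursion of `[M]!_q {|S| brace M}_q`. When the removed element is pinned to a block where it
creates no inversions (`0` in the first block, `k + 1` in the last), only the choice between a new
singleton block and an existing block remains, and
`[m]!_q {c brace m}_q + [m+1]!_q {c brace m+1}_q = [m]!_q {c+1 brace m+1}_q`.
-/

def blockInv (B C : Finset ℕ) : ℕ := #{b ∈ B | ∃ c ∈ C, c < b}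

theorem sum_range_length_getD {α M : Type*} [AddCommMonoid M] (l : List α) (d : α)
    (f : α → M) :
    ∑ i ∈ range l.length, f (l.getD i d) = (l.map f).sum := by
  induction l with
  | nil => simp
  | cons a t ih =>
    simp only [List.length_cons, sum_range_succ', List.getD_cons_succ, List.getD_cons_zero, ih,
      List.map_cons, List.sum_cons, add_comm]

theorem invStar_eq_sum_sum (l : List (Finset ℕ)) :
    invStar l = ∑ i ∈ range l.length, ∑ j ∈ range l.length,
      if i < j then blockInv (l.getD i ∅) (l.getD j ∅) else 0 := by
  rw [invStar, sum_filter, sum_product]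
  rfl

@[simp]
theorem invStar_nil : invStar [] = 0 := rfl

theorem invStar_cons (B : Finset ℕ) (t : List (Finset ℕ)) :
    invStar (B :: t) = (t.map (blockInv B)).sum + invStar t := by
  simp only [invStar_eq_sum_sum, List.length_cons, sum_range_succ', List.getD_cons_succ,
    List.getD_cons_zero, add_lt_add_iff_right, Nat.not_lt_zero, Nat.zero_lt_succ, if_true,
    if_false, sum_range_length_getD, zero_add, add_comm]

section blockInv

variable {x : ℕ} {B C : Finset ℕ}

theorem blockInv_insert_left_of_exists_lt (hxB : x ∉ B) (hC : ∃ c ∈ C, c < x) :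
    blockInv (insert x B) C = blockInv B C + 1 := by
  rw [blockInv, filter_insert, if_pos hC, card_insert_of_notMem (by simp [hxB]), blockInv]

theorem blockInv_insert_left_of_le (hC : ∀ c ∈ C, x ≤ c) :
    blockInv (insert x B) C = blockInv B C := by
  have : ¬∃ c ∈ C, c < x := fun ⟨c, hc, hcx⟩ => (hC c hc).not_gt hcx
  rw [blockInv, filter_insert, if_neg this, blockInv]

theorem blockInv_insert_right_of_lt (hB : ∀ b ∈ B, b < x) :
    blockInv B (insert x C) = blockInv B C := by
  unfold blockInv
  congr 1
  refine filter_congr fun b hb => ?_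
  simp only [mem_insert, exists_eq_or_imp, or_iff_right_iff_imp]
  exact fun hxb => absurd (hB b hb) hxb.not_gt

end blockInv

theorem List.modify_perm_cons_eraseIdx {α : Type*} {l : List α} {i : ℕ} (f : α → α)
    (hi : i < l.length) : (l.modify i f).Perm (f l[i] :: l.eraseIdx i) := by
  rw [List.modify_eq_take_cons_drop hi, List.eraseIdx_eq_take_drop_succ]
  exact List.perm_middle

theorem List.perm_cons_eraseIdx {α : Type*} {l : List α} {i : ℕ} (hi : i < l.length) :
    l.Perm (l[i] :: l.eraseIdx i) := by
  simpa using l.modify_perm_cons_eraseIdx id hi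

section insertMax

variable {x : ℕ} {l : List (Finset ℕ)}

theorem invStar_cons_singleton_of_lt (hne : ∀ B ∈ l, B.Nonempty)
    (hlt : ∀ B ∈ l, ∀ b ∈ B, b < x) : invStar ({x} :: l) = invStar l + l.length := by
  have hone : ∀ C ∈ l, blockInv {x} C = 1 := fun C hC => by
    obtain ⟨c, hc⟩ := hne C hC
    simpa [blockInv] using blockInv_insert_left_of_exists_lt (B := ∅) (notMem_empty x)
      ⟨c, hc, hlt C hC c hc⟩
  rw [invStar_cons, List.map_congr_left hone]
  simp [add_comm]

theorem invStar_insertIdx_singleton_of_lt (hne : ∀ B ∈ l, B.Nonempty)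
    (hlt : ∀ B ∈ l, ∀ b ∈ B, b < x) {i : ℕ} (hi : i ≤ l.length) :
    invStar (l.insertIdx i {x}) = invStar l + (l.length - i) := by
  induction l generalizing i with
  | nil => simp_all [invStar_cons]
  | cons B t ih =>
    rcases i with _ | i
    · simpa using invStar_cons_singleton_of_lt hne hlt
    have hBx : blockInv B {x} = 0 := by
      simpa [blockInv] using fun b hb => (hlt B (by simp) b hb).le
    have hsum := ((List.perm_insertIdx {x} t (by simpa using hi)).map (blockInv B)).sum_eq
    rw [List.insertIdx_succ_cons, invStar_cons, invStar_cons, hsum,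
      ih (fun C hC => hne C (by simp [hC])) (fun C hC => hlt C (by simp [hC])) (by simpa using hi)]
    simp only [List.map_cons, hBx, List.sum_cons, zero_add, List.length_cons, Nat.reduceSubDiff]
    omega

theorem invStar_modify_insert_of_lt (hne : ∀ B ∈ l, B.Nonempty)
    (hlt : ∀ B ∈ l, ∀ b ∈ B, b < x) {i : ℕ} (hi : i < l.length) :
    invStar (l.modify i (insert x)) = invStar l + (l.length - 1 - i) := by
  induction l generalizing i with
  | nil => simp at hi
  | cons B t ih =>
    rcases i with _ | i
    · have hsucc : ∀ C ∈ t, blockInv (insert x B) C = blockInv B C + 1 := fun C hC => by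
        obtain ⟨c, hc⟩ := hne C (by simp [hC])
        exact blockInv_insert_left_of_exists_lt (fun h => (hlt B (by simp) x h).false)
          ⟨c, hc, hlt C (by simp [hC]) c hc⟩
      rw [List.modify_zero_cons, invStar_cons, invStar_cons, List.map_congr_left hsucc]
      simp only [List.sum_map_add, List.map_const', List.sum_replicate, smul_eq_mul, mul_one,
        List.length_cons, add_tsub_cancel_right, tsub_zero]
      omega
    have hti : i < t.length := by simpa using hi
    have hsum : ((t.modify i (insert x)).map (blockInv B)).sum = (t.map (blockInv B)).sum := by
      rw [((t.modify_perm_cons_eraseIdx _ hti).map _).sum_eq,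
        ((List.perm_cons_eraseIdx hti).map _).sum_eq]
      simp [blockInv_insert_right_of_lt (hlt B (by simp))]
    rw [List.modify_succ_cons, invStar_cons, invStar_cons, hsum,
      ih (fun C hC => hne C (by simp [hC])) (fun C hC => hlt C (by simp [hC])) hti]
    simp only [List.length_cons, add_tsub_cancel_right]
    omega

end insertMax

section insertMin

variable {x : ℕ} {B : Finset ℕ} {l : List (Finset ℕ)}

theorem invStar_cons_singleton_of_le (hle : ∀ C ∈ l, ∀ c ∈ C, x ≤ c) :
    invStar ({x} :: l) = invStar l := by
  have hzero : ∀ C ∈ l, blockInv {x} C = 0 := fun C hC => by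
    simpa [blockInv] using fun c hc => hle C hC c hc
  rw [invStar_cons, List.map_congr_left hzero]
  simp

theorem invStar_cons_insert_of_le (hle : ∀ C ∈ l, ∀ c ∈ C, x ≤ c) :
    invStar (insert x B :: l) = invStar (B :: l) := by
  rw [invStar_cons, invStar_cons,
    List.map_congr_left fun C hC => blockInv_insert_left_of_le (hle C hC)]

end insertMin

section OrderedPartition

variable {S : Finset ℕ} {l ω : List (Finset ℕ)} {B : Finset ℕ} {x i M : ℕ}

theorem IsOrderedPartitionOf.subset (h : IsOrderedPartitionOf S l) (hB : B ∈ l) : B ⊆ S :=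
  fun _ hb => (h.2.2 _).2 ⟨B, hB, hb⟩

theorem IsOrderedPartitionOf.forall_of_forall_mem {p : ℕ → Prop} (h : IsOrderedPartitionOf S l)
    (hp : ∀ y ∈ S, p y) : ∀ B ∈ l, ∀ b ∈ B, p b :=
  fun _ hB b hb => hp b (h.subset hB hb)

theorem IsOrderedPartitionOf.perm {l' : List (Finset ℕ)} (h : IsOrderedPartitionOf S l)
    (hp : l.Perm l') : IsOrderedPartitionOf S l' :=
  ⟨fun B hB => h.1 B (hp.mem_iff.2 hB), hp.pairwise h.2.1 fun hd => hd.symm,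
    fun y => by simp only [h.2.2 y, hp.mem_iff]⟩

theorem IsOrderedPartitionOf.nodup (h : IsOrderedPartitionOf S l) : l.Nodup :=
  h.2.1.imp_of_mem fun {B _} hB _ hd hBC =>
    (h.1 B hB).ne_empty <| (disjoint_self_iff_empty B).1 (by subst hBC; exact hd)

theorem isOrderedPartitionOf_nil : IsOrderedPartitionOf S [] ↔ S = ∅ := by
  simp [IsOrderedPartitionOf, eq_empty_iff_forall_notMem]

theorem isOrderedPartitionOf_cons {t : List (Finset ℕ)} :
    IsOrderedPartitionOf S (B :: t) ↔
      B.Nonempty ∧ B ⊆ S ∧ IsOrderedPartitionOf (S \ B) t := by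
  simp only [IsOrderedPartitionOf, List.forall_mem_cons, List.pairwise_cons, mem_sdiff,
    disjoint_left, subset_iff]
  grind

theorem isOrderedPartitionOf_empty : IsOrderedPartitionOf ∅ l ↔ l = [] := by
  cases l with
  | nil => simp [isOrderedPartitionOf_nil]
  | cons B t =>
    simp only [isOrderedPartitionOf_cons, subset_empty, reduceCtorEq, iff_false]
    exact fun ⟨hB, hB', _⟩ => hB.ne_empty hB'

theorem IsOrderedPartitionOf.exists_mem_getD (h : IsOrderedPartitionOf S l) (hx : x ∈ S) :
    ∃ i < l.length, x ∈ l.getD i ∅ := by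
  obtain ⟨B, hB, hxB⟩ := (h.2.2 x).1 hx
  obtain ⟨i, hi, rfl⟩ := List.mem_iff_getElem.1 hB
  exact ⟨i, hi, by rwa [List.getD_eq_getElem _ _ hi]⟩

theorem IsOrderedPartitionOf.eq_of_mem_getD (h : IsOrderedPartitionOf S l) {j : ℕ}
    (hi : x ∈ l.getD i ∅) (hj : x ∈ l.getD j ∅) : i = j := by
  have hlen : ∀ {k}, x ∈ l.getD k ∅ → k < l.length := fun hk => by
    by_contra hk'
    rw [List.getD_eq_default _ _ (not_lt.1 hk')] at hk
    exact notMem_empty x hk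
  have hi' := hlen hi
  have hj' := hlen hj
  rw [List.getD_eq_getElem _ _ hi'] at hi
  rw [List.getD_eq_getElem _ _ hj'] at hj
  have hdisj := List.pairwise_iff_getElem.1 h.2.1
  by_contra hne
  rcases lt_or_gt_of_ne hne with hlt | hlt
  · exact disjoint_left.1 (hdisj i j hi' hj' hlt) hi hj
  · exact disjoint_left.1 (hdisj j i hj' hi' hlt) hj hi

-- Blocks of an ordered partition are distinct, so it is a permutation of a sublist of
-- `S.powerset.toList`; this bounds the finset.
open Classical in
noncomputable def orderedPartitions (S : Finset ℕ) (M : ℕ) : Finset (List (Finset ℕ)) :=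
  {l ∈ (S.powerset.toList.sublists.flatMap List.permutations).toFinset |
    IsOrderedPartitionOf S l ∧ l.length = M}

theorem mem_orderedPartitions :
    l ∈ orderedPartitions S M ↔ IsOrderedPartitionOf S l ∧ l.length = M := by
  simp only [orderedPartitions, mem_filter, List.mem_toFinset, List.mem_flatMap, List.mem_sublists,
    List.mem_permutations, and_iff_right_iff_imp]
  rintro ⟨h, -⟩
  obtain ⟨l', hp, hs⟩ := List.subperm_of_subset (l₂ := S.powerset.toList) h.nodup
    fun B hB => by simpa using h.subset hB
  exact ⟨l', hs, hp.symm⟩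

theorem IsOrderedPartitionOf.insertIdx_singleton (hx : x ∉ S) (h : IsOrderedPartitionOf S l)
    (hi : i ≤ l.length) : IsOrderedPartitionOf (insert x S) (l.insertIdx i {x}) := by
  refine (isOrderedPartitionOf_cons.2 ⟨singleton_nonempty x, by simp, ?_⟩).perm
    (List.perm_insertIdx _ _ hi).symm
  rwa [sdiff_singleton_eq_erase, erase_insert hx]

theorem IsOrderedPartitionOf.modify_insert (hx : x ∉ S) (h : IsOrderedPartitionOf S l)
    (hi : i < l.length) : IsOrderedPartitionOf (insert x S) (l.modify i (insert x)) := by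
  obtain ⟨-, hsub, hrest⟩ := isOrderedPartitionOf_cons.1 (h.perm (List.perm_cons_eraseIdx hi))
  have hcons : IsOrderedPartitionOf (insert x S) (insert x l[i] :: l.eraseIdx i) :=
    isOrderedPartitionOf_cons.2 ⟨insert_nonempty _ _, insert_subset_insert _ hsub,
      by rwa [insert_sdiff_insert, sdiff_insert_of_notMem hx]⟩
  exact hcons.perm (l.modify_perm_cons_eraseIdx _ hi).symm

theorem IsOrderedPartitionOf.exists_eq_insertIdx_or_modify (hx : x ∉ S)
    (h : IsOrderedPartitionOf (insert x S) ω) (hi : i < ω.length) (hxi : x ∈ ω[i]) :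
    (∃ l, IsOrderedPartitionOf S l ∧ l.insertIdx i {x} = ω) ∨
      ∃ l, IsOrderedPartitionOf S l ∧ l.modify i (insert x) = ω := by
  obtain ⟨hne, hsub, hrest⟩ := isOrderedPartitionOf_cons.1 (h.perm (List.perm_cons_eraseIdx hi))
  by_cases hsingle : ω[i] = {x}
  · refine .inl ⟨ω.eraseIdx i, ?_, ?_⟩
    · rwa [hsingle, sdiff_singleton_eq_erase, erase_insert hx] at hrest
    · rw [← hsingle]
      exact List.insertIdx_eraseIdx_getElem hi
  refine .inr ⟨ω.modify i (·.erase x), ?_, ?_⟩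
  · have hB : (ω[i].erase x).Nonempty := by
      rw [nonempty_iff_ne_empty, Ne, erase_eq_empty_iff]
      exact not_or.2 ⟨hne.ne_empty, hsingle⟩
    rw [← insert_erase hxi, insert_sdiff_insert, sdiff_insert_of_notMem hx] at hrest
    refine (isOrderedPartitionOf_cons.2 ⟨hB, ?_, hrest⟩).perm
      (ω.modify_perm_cons_eraseIdx (·.erase x) hi).symm
    simpa [erase_insert hx] using erase_subset_erase x hsub
  · apply List.ext_getElem (by simp)
    intro j _ _
    simp only [List.getElem_modify]
    split_ifs with hij <;> simp_all

theorem IsOrderedPartitionOf.modify_erase_modify_insert (hx : x ∉ S)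
    (h : IsOrderedPartitionOf S l) :
    (l.modify i (insert x)).modify i (·.erase x) = l := by
  apply List.ext_getElem (by simp)
  intro j _ hj
  simp only [List.getElem_modify]
  split_ifs
  · exact erase_insert fun hxl => hx (h.subset (List.getElem_mem hj) hxl)
  · rfl

end OrderedPartition

section Decomposition

variable {S : Finset ℕ} {x i M : ℕ}

theorem filter_mem_getD_orderedPartitions_insert (hx : x ∉ S) (hi : i ≤ M) :
    {ω ∈ orderedPartitions (insert x S) (M + 1) | x ∈ ω.getD i ∅} =
      (orderedPartitions S M).image (·.insertIdx i {x}) ∪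
        (orderedPartitions S (M + 1)).image (·.modify i (insert x)) := by
  ext ω
  simp only [mem_filter, mem_union, mem_image, mem_orderedPartitions]
  constructor
  · rintro ⟨⟨h, hlen⟩, hxω⟩
    have hiω : i < ω.length := by omega
    rw [List.getD_eq_getElem _ _ hiω] at hxω
    rcases h.exists_eq_insertIdx_or_modify hx hiω hxω with ⟨l, hl, rfl⟩ | ⟨l, hl, rfl⟩
    · refine .inl ⟨l, ⟨hl, ?_⟩, rfl⟩
      simp only [List.length_insertIdx] at hlen
      split_ifs at hlen <;> omega
    · exact .inr ⟨l, ⟨hl, by simpa using hlen⟩, rfl⟩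
  · rintro (⟨l, ⟨hl, hlen⟩, rfl⟩ | ⟨l, ⟨hl, hlen⟩, rfl⟩)
    · refine ⟨⟨hl.insertIdx_singleton hx (by omega), ?_⟩, ?_⟩
      · simp [List.length_insertIdx_of_le_length (hlen ▸ hi : i ≤ l.length), hlen]
      · simp [List.getD_eq_getElem?_getD, List.getElem?_insertIdx_self, hlen, hi]
    · refine ⟨⟨hl.modify_insert hx (by omega), by simpa using hlen⟩, ?_⟩
      simp [List.getD_eq_getElem?_getD, List.getElem?_eq_getElem (by omega : i < l.length)]

theorem sum_filter_mem_getD_orderedPartitions_insert {R : Type*} [AddCommMonoid R]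
    (f : List (Finset ℕ) → R) (hx : x ∉ S) (hi : i ≤ M) :
    ∑ ω ∈ orderedPartitions (insert x S) (M + 1) with x ∈ ω.getD i ∅, f ω =
      ∑ l ∈ orderedPartitions S M, f (l.insertIdx i {x}) +
        ∑ l ∈ orderedPartitions S (M + 1), f (l.modify i (insert x)) := by
  have hdisj : Disjoint ((orderedPartitions S M).image (·.insertIdx i {x}))
      ((orderedPartitions S (M + 1)).image (·.modify i (insert x))) := by
    simp only [disjoint_left, mem_image, mem_orderedPartitions, not_exists, not_and]
    rintro _ ⟨l, ⟨-, hlen⟩, rfl⟩ l' ⟨hl', hlen'⟩ heq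
    have hil' : i < l'.length := by omega
    obtain ⟨y, hy⟩ := hl'.1 _ (List.getElem_mem hil')
    have hyx : y ≠ x := fun hyx => hx (hyx ▸ hl'.subset (List.getElem_mem hil') hy)
    have hblock := congrArg (·[i]?) heq
    simp [List.getElem?_insertIdx_self, hlen, hi, List.getElem?_eq_getElem hil'] at hblock
    exact hyx (mem_singleton.1 (hblock ▸ mem_insert_of_mem hy))
  have hinj : Set.InjOn (fun l : List (Finset ℕ) ↦ l.modify i (insert x))
      (orderedPartitions S (M + 1)) := by
    intro l hl l' hl' heq
    rw [← (mem_orderedPartitions.1 hl).1.modify_erase_modify_insert hx (i := i),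
      ← (mem_orderedPartitions.1 hl').1.modify_erase_modify_insert hx (i := i)]
    exact congrArg (·.modify i (·.erase x)) heq
  rw [filter_mem_getD_orderedPartitions_insert hx hi, sum_union hdisj,
    sum_image fun _ _ _ _ heq => List.insertIdx_injective i {x} heq, sum_image hinj]

theorem sum_orderedPartitions_eq_sum_range_sum_filter {β : Type*} [AddCommMonoid β] (hx : x ∈ S)
    (M : ℕ) (f : List (Finset ℕ) → β) :
    ∑ ω ∈ orderedPartitions S M, f ω =
      ∑ i ∈ range M, ∑ ω ∈ orderedPartitions S M with x ∈ ω.getD i ∅, f ω := by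
  simp_rw [sum_filter]
  rw [sum_comm]
  refine sum_congr rfl fun ω hω => ?_
  obtain ⟨h, rfl⟩ := mem_orderedPartitions.1 hω
  obtain ⟨j, hj, hxj⟩ := h.exists_mem_getD hx
  rw [sum_eq_single_of_mem j (mem_range.2 hj)
    (fun k _ hk => if_neg fun hxk => hk (h.eq_of_mem_getD hxk hxj)), if_pos hxj]

end Decomposition

section GeneratingFunction

variable {R : Type*} [CommSemiring R] (q : R)

theorem qFact_succ (m : ℕ) : qFact q (m + 1) = qFact q m * qInt q (m + 1) :=
  prod_range_succ _ _

theorem qStirling_succ_succ (n m : ℕ) :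
    qStirling q (n + 1) (m + 1) = qStirling q n m + qInt q (m + 1) * qStirling q n (m + 1) :=
  rfl

theorem qFact_mul_qStirling_add_qFact_mul_qStirling (n m : ℕ) :
    qFact q m * qStirling q n m + qFact q (m + 1) * qStirling q n (m + 1) =
      qFact q m * qStirling q (n + 1) (m + 1) := by
  rw [qFact_succ, qStirling_succ_succ]
  ring

theorem sum_range_pow_sub (m : ℕ) : ∑ i ∈ range (m + 1), q ^ (m - i) = qInt q (m + 1) := by
  simpa [qInt] using sum_range_reflect (q ^ ·) (m + 1)

theorem sum_pow_invStar_orderedPartitions (S : Finset ℕ) (M : ℕ) :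
    ∑ ω ∈ orderedPartitions S M, q ^ invStar ω = qFact q M * qStirling q #S M := by
  induction S using Finset.induction_on_max generalizing M with
  | empty =>
    rcases M with _ | M
    · have : orderedPartitions ∅ 0 = {[]} := by
        ext l
        simp [mem_orderedPartitions, isOrderedPartitionOf_empty]
      simp [this, qFact, qStirling]
    · have : orderedPartitions ∅ (M + 1) = ∅ := by
        ext l
        simp +contextual [mem_orderedPartitions, isOrderedPartitionOf_empty]
      simp [this, qStirling]
  | insert x S hlt ih =>
    have hx : x ∉ S := fun h => (hlt x h).false
    rw [card_insert_of_notMem hx]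
    rcases M with _ | M
    · have : orderedPartitions (insert x S) 0 = ∅ := by
        ext l
        simp only [mem_orderedPartitions, List.length_eq_zero_iff, notMem_empty, iff_false,
          not_and]
        rintro h rfl
        exact insert_ne_empty x S (isOrderedPartitionOf_nil.1 h)
      simp [this, qStirling]
    have hblock : ∀ i ∈ range (M + 1),
        ∑ ω ∈ orderedPartitions (insert x S) (M + 1) with x ∈ ω.getD i ∅, q ^ invStar ω =
          q ^ (M - i) * (∑ l ∈ orderedPartitions S M, q ^ invStar l +
            ∑ l ∈ orderedPartitions S (M + 1), q ^ invStar l) := fun i hi => by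
      have hi : i ≤ M := Nat.lt_succ_iff.1 (mem_range.1 hi)
      rw [sum_filter_mem_getD_orderedPartitions_insert _ hx hi, mul_add, mul_sum, mul_sum]
      congr 1 <;> refine sum_congr rfl fun l hl => ?_ <;>
        obtain ⟨h, hlen⟩ := mem_orderedPartitions.1 hl
      · rw [invStar_insertIdx_singleton_of_lt h.1 (h.forall_of_forall_mem hlt) (by omega), hlen,
          pow_add, mul_comm]
      · rw [invStar_modify_insert_of_lt h.1 (h.forall_of_forall_mem hlt) (by omega), hlen,
          Nat.add_sub_cancel, pow_add, mul_comm]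
    rw [sum_orderedPartitions_eq_sum_range_sum_filter (mem_insert_self x S), sum_congr rfl hblock,
      ← sum_mul, sum_range_pow_sub, ih, ih, qFact_mul_qStirling_add_qFact_mul_qStirling,
      qFact_succ]
    ring

end GeneratingFunction

section Pinned

variable {R : Type*} [CommSemiring R] (q : R) {S : Finset ℕ} {x i m : ℕ}

theorem sum_pow_invStar_filter_mem_getD_of_invStar_eq (hx : x ∉ S) (hi : i ≤ m)
    (hsingle : ∀ l ∈ orderedPartitions S m, invStar (l.insertIdx i {x}) = invStar l)
    (hinsert : ∀ l ∈ orderedPartitions S (m + 1), invStar (l.modify i (insert x)) = invStar l) :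
    ∑ ω ∈ orderedPartitions (insert x S) (m + 1) with x ∈ ω.getD i ∅, q ^ invStar ω =
      qFact q m * qStirling q (#S + 1) (m + 1) := by
  have hsingle' : ∑ l ∈ orderedPartitions S m, q ^ invStar (l.insertIdx i {x}) =
      ∑ l ∈ orderedPartitions S m, q ^ invStar l :=
    sum_congr rfl fun l hl => by rw [hsingle l hl]
  have hinsert' : ∑ l ∈ orderedPartitions S (m + 1), q ^ invStar (l.modify i (insert x)) =
      ∑ l ∈ orderedPartitions S (m + 1), q ^ invStar l :=
    sum_congr rfl fun l hl => by rw [hinsert l hl]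
  rw [sum_filter_mem_getD_orderedPartitions_insert _ hx hi, hsingle', hinsert',
    sum_pow_invStar_orderedPartitions, sum_pow_invStar_orderedPartitions,
    qFact_mul_qStirling_add_qFact_mul_qStirling]

theorem sum_pow_invStar_filter_mem_getD_zero_of_lt (hlt : ∀ y ∈ S, x < y) :
    ∑ ω ∈ orderedPartitions (insert x S) (m + 1) with x ∈ ω.getD 0 ∅, q ^ invStar ω =
      qFact q m * qStirling q (#S + 1) (m + 1) := by
  have hle : ∀ y ∈ S, x ≤ y := fun y hy => (hlt y hy).le
  refine sum_pow_invStar_filter_mem_getD_of_invStar_eq q (fun h => (hlt x h).false) m.zero_le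
    (fun l hl => ?_) (fun l hl => ?_)
  · rw [List.insertIdx_zero]
    exact invStar_cons_singleton_of_le ((mem_orderedPartitions.1 hl).1.forall_of_forall_mem hle)
  · obtain ⟨h, hlen⟩ := mem_orderedPartitions.1 hl
    obtain ⟨B, t, rfl⟩ := List.exists_cons_of_length_eq_add_one hlen
    rw [List.modify_zero_cons]
    exact invStar_cons_insert_of_le fun C hC =>
      h.forall_of_forall_mem hle C (List.mem_cons_of_mem B hC)

theorem sum_pow_invStar_filter_mem_getD_self_of_lt (hlt : ∀ y ∈ S, y < x) :
    ∑ ω ∈ orderedPartitions (insert x S) (m + 1) with x ∈ ω.getD m ∅, q ^ invStar ω =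
      qFact q m * qStirling q (#S + 1) (m + 1) := by
  refine sum_pow_invStar_filter_mem_getD_of_invStar_eq q (fun h => (hlt x h).false) le_rfl
    (fun l hl => ?_) (fun l hl => ?_) <;> obtain ⟨h, hlen⟩ := mem_orderedPartitions.1 hl
  · simpa [hlen] using
      invStar_insertIdx_singleton_of_lt h.1 (h.forall_of_forall_mem hlt) hlen.ge
  · simpa [hlen] using
      invStar_modify_insert_of_lt (i := m) h.1 (h.forall_of_forall_mem hlt) (by omega)

end Pinned

/-- The q-poly-Bernoulli number
`B_{n,q}^{(k)} = ∑_{m=0}^{min(n,k)} [m]!_q {n+1 brace m+1}_q [m]!_q {k+1 brace m+1}_q`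
is the generating polynomial of `q^{Inv*(σ)+Inv*(τ)}` over pairs `(σ, τ)`, where for some
`m ≤ min(n,k)`, `σ` is an ordered set partition of `{0, 1, …, n}` into `m+1` blocks whose
first block contains `0`, and `τ` is an ordered set partition of `{1, …, k+1}` into `m+1`
blocks whose last block contains `k+1`. -/
theorem qPolyBernoulli_eq_sum_invStar (n k : ℕ) :
    (∑ m ∈ Finset.range (min n k + 1),
        qFact (Polynomial.X : Polynomial ℚ) m * qStirling (Polynomial.X : Polynomial ℚ) (n + 1) (m + 1) *
          qFact (Polynomial.X : Polynomial ℚ) m * qStirling (Polynomial.X : Polynomial ℚ) (k + 1) (m + 1))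
      = ∑ᶠ p ∈ {p : List (Finset ℕ) × List (Finset ℕ) |
            ∃ m ≤ min n k,
              IsOrderedPartitionOf (Finset.range (n + 1)) p.1 ∧ p.1.length = m + 1 ∧
                0 ∈ p.1.getD 0 ∅ ∧
              IsOrderedPartitionOf (Finset.Icc 1 (k + 1)) p.2 ∧ p.2.length = m + 1 ∧
                (k + 1) ∈ p.2.getD m ∅},
          (Polynomial.X : Polynomial ℚ) ^ (invStar p.1 + invStar p.2) := by
  have hrange : range (n + 1) = insert 0 (Icc 1 n) := by
    ext
    simp only [mem_range, Order.lt_add_one_iff, mem_insert, mem_Icc]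
    omega
  have hIcc : Icc 1 (k + 1) = insert (k + 1) (Icc 1 k) := by
    ext
    simp only [mem_Icc, mem_insert]
    omega
  calc _ = ∑ m ∈ range (min n k + 1),
        ∑ p ∈ {σ ∈ orderedPartitions (range (n + 1)) (m + 1) | 0 ∈ σ.getD 0 ∅} ×ˢ
          {τ ∈ orderedPartitions (Icc 1 (k + 1)) (m + 1) | k + 1 ∈ τ.getD m ∅},
          (X : ℚ[X]) ^ (invStar p.1 + invStar p.2) := by
        refine sum_congr rfl fun m _ => ?_
        simp_rw [sum_product, pow_add]
        rw [← sum_mul_sum, hrange, hIcc,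
          sum_pow_invStar_filter_mem_getD_zero_of_lt _ fun y hy => (mem_Icc.1 hy).1,
          sum_pow_invStar_filter_mem_getD_self_of_lt _
            fun y hy => Nat.lt_succ_of_le (mem_Icc.1 hy).2,
          Nat.card_Icc, Nat.card_Icc, Nat.add_sub_cancel, Nat.add_sub_cancel]
        ring
    _ = _ := by
      rw [← sum_biUnion, ← finsum_mem_coe_finset]
      · refine finsum_mem_congr (Set.ext fun p => ?_) fun _ _ => rfl
        simp only [coe_biUnion, coe_range, Set.mem_Iio, coe_product, coe_filter, Set.mem_iUnion,
          Set.mem_prod, Set.mem_ofPred_eq, mem_orderedPartitions, Nat.lt_succ_iff, exists_prop,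
          and_assoc]
      · intro m _ m' _ hmm'
        refine disjoint_left.2 fun p hp hp' => hmm' ?_
        simp only [mem_product, mem_filter, mem_orderedPartitions] at hp hp'
        omega
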